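/- Let q : ℝ → ℝ be continuous on [0,1] and α, β, γ ∈ ℝ with sin(β − γ) ≠ 0. For i ∈ {1,2} and n ∈ ℕ, let λ_{i,n} ∈ ℝ, with n ↦ λ_{1,n} and n ↦ λ_{2,n} injective. For each (i,n), let s_{i,n} and c_{i,n} be twice continuously differentiable solutions of −u'' + q u = λ_{i,n} u on [0,1] with terminal values s_{i,n}(1) = sin β, s_{i,n}'(1) = −cos β, c_{i,n}(1) = sin γ, c_{i,n}'(1) = −cos γ. Suppose s_{1,n}(0)cos α + s_{1,n}'(0)sin α = 0 and c_{2,n}(0)cos α + c_{2,n}'(0)sin α = 0 for all n, and set g_{1,n} = s_{1,n}/(∫₀¹ s_{1,n}²)^{1/2} and g_{2,n} = c_{2,n}/(∫₀¹ c_{2,n}²)^{1/2}. Then for all i, j ∈ {1,2} and n, m ∈ ℕ: Γ(c_{i,n} s_{i,n}, g_{j,m}²) = (−1)^i sin(γ − β) if (i,n) = (j,m), and Γ(c_{i,n} s_{i,n}, g_{j,m}²) = 0 otherwise. -/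

import Mathlib

/-!
If `u, v` solve `-y'' + q y = λ y` and `w` solves `-y'' + q y = μ y`, then
`[u, w]' = (λ - μ) u w` and `[u v, w²] = u w [v, w] + v w [u, w]`, hence
`(λ - μ) Γ(u v, w²) = [u, w] [v, w] |₀¹`. Off the diagonal the eigenvalues differ (for the two
problems because a common eigenvalue would make `[s₁, c₂]` constant, zero at `0` by the
condition `α` and equal to `sin (γ - β) ≠ 0` at `1`), and `[c, w] [s, w]` vanishes at `0` by the
condition `α` and at `1` because `w` shares its terminal data with `c` or with `s`. On the
diagonal the Wronskian `[u, v]` is constant, so `Γ(u v, v²) = [u, v](1) ∫ v²`, and the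
normalisation cancels `∫ v²`.
-/

open Set intervalIntegral

namespace SturmLiouville

def wronskian (f f' g g' : ℝ → ℝ) (x : ℝ) : ℝ := f x * g' x - f' x * g x

noncomputable def gammaForm (f f' g g' : ℝ → ℝ) : ℝ :=
  ∫ x in (0:ℝ)..1, wronskian f f' g g' x

structure IsSolution (q : ℝ → ℝ) (lam : ℝ) (u u' u'' : ℝ → ℝ) : Prop where
  hasDerivAt : ∀ x ∈ Icc (0:ℝ) 1, HasDerivAt u (u' x) x ∧ HasDerivAt u' (u'' x) x
  equation : ∀ x ∈ Icc (0:ℝ) 1, -u'' x + q x * u x = lam * u x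

theorem wronskian_eq_zero_of_boundary {u u' v v' : ℝ → ℝ} {x α : ℝ}
    (hu : u x * Real.cos α + u' x * Real.sin α = 0)
    (hv : v x * Real.cos α + v' x * Real.sin α = 0) :
    wronskian u u' v v' x = 0 := by
  unfold wronskian
  linear_combination (v' x * Real.cos α - v x * Real.sin α) * hu
    + (u x * Real.sin α - u' x * Real.cos α) * hv
    - (u x * v' x - u' x * v x) * Real.cos_sq_add_sin_sq α

theorem wronskian_swap (u u' v v' : ℝ → ℝ) (x : ℝ) :
    wronskian v v' u u' x = -wronskian u u' v v' x := by
  simp only [wronskian]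
  ring

theorem hasDerivAt_wronskian {u u' u'' v v' v'' : ℝ → ℝ} {x : ℝ}
    (hu : HasDerivAt u (u' x) x) (hu' : HasDerivAt u' (u'' x) x)
    (hv : HasDerivAt v (v' x) x) (hv' : HasDerivAt v' (v'' x) x) :
    HasDerivAt (wronskian u u' v v') (u x * v'' x - u'' x * v x) x :=
  ((hu.mul hv').sub (hu'.mul hv)).congr_deriv (by ring)

theorem gammaForm_div_sq (f f' b b' : ℝ → ℝ) (N : ℝ) :
    gammaForm f f' (fun x => (b x / N) ^ 2) (fun x => 2 * (b x / N) * (b' x / N)) =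
      gammaForm f f' (fun x => b x ^ 2) (fun x => 2 * b x * b' x) / N ^ 2 := by
  simp only [gammaForm, wronskian, ← integral_div]
  congr 1 with x
  ring

theorem gammaForm_mul_comm (u u' v v' g g' : ℝ → ℝ) :
    gammaForm (fun x => u x * v x) (fun x => u' x * v x + u x * v' x) g g' =
      gammaForm (fun x => v x * u x) (fun x => v' x * u x + v x * u' x) g g' := by
  simp only [gammaForm, wronskian]
  congr 1 with x
  ring

theorem integral_sq_pos_of_hasDerivAt {f f' : ℝ → ℝ}
    (hf : ∀ x ∈ Icc (0:ℝ) 1, HasDerivAt f (f' x) x) (h1 : f 1 ≠ 0 ∨ f' 1 ≠ 0) :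
    0 < ∫ x in (0:ℝ)..1, f x ^ 2 := by
  have hcont : ContinuousOn f (Icc 0 1) := fun x hx => (hf x hx).continuousAt.continuousWithinAt
  refine integral_pos zero_lt_one (hcont.pow 2) (fun _ _ => sq_nonneg _) ?_
  by_contra! hle
  have hzero : EqOn f 0 (Icc 0 1) := fun x hx =>
    (pow_eq_zero_iff two_ne_zero).1 (le_antisymm (hle x hx) (sq_nonneg _))
  have hmem : (1:ℝ) ∈ Icc (0:ℝ) 1 := right_mem_Icc.2 zero_le_one
  have hderiv : f' 1 = 0 := (uniqueDiffOn_Icc_zero_one 1 hmem).eq_deriv _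
    (hf 1 hmem).hasDerivWithinAt ((hasDerivWithinAt_const 1 _ (0:ℝ)).congr hzero (hzero hmem))
  exact h1.elim (· (hzero hmem)) (· hderiv)

namespace IsSolution

variable {q : ℝ → ℝ} {lam mu : ℝ} {u u' u'' v v' v'' w w' w'' : ℝ → ℝ}

theorem continuousOn (hu : IsSolution q lam u u' u'') : ContinuousOn u (Icc 0 1) :=
  fun x hx => (hu.hasDerivAt x hx).1.continuousAt.continuousWithinAt

theorem continuousOn_deriv (hu : IsSolution q lam u u' u'') : ContinuousOn u' (Icc 0 1) :=
  fun x hx => (hu.hasDerivAt x hx).2.continuousAt.continuousWithinAt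

theorem hasDerivAt_wronskian (hu : IsSolution q lam u u' u'') (hv : IsSolution q mu v v' v'')
    {x : ℝ} (hx : x ∈ Icc (0:ℝ) 1) :
    HasDerivAt (wronskian u u' v v') ((lam - mu) * (u x * v x)) x := by
  obtain ⟨hux, hu'x⟩ := hu.hasDerivAt x hx
  obtain ⟨hvx, hv'x⟩ := hv.hasDerivAt x hx
  refine (SturmLiouville.hasDerivAt_wronskian hux hu'x hvx hv'x).congr_deriv ?_
  linear_combination v x * hu.equation x hx - u x * hv.equation x hx

theorem wronskian_eq_wronskian_one (hu : IsSolution q lam u u' u'')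
    (hv : IsSolution q lam v v' v'') {x : ℝ} (hx : x ∈ Icc (0:ℝ) 1) :
    wronskian u u' v v' x = wronskian u u' v v' 1 := by
  have hderiv y (hy : y ∈ Icc (0:ℝ) 1) : HasDerivAt (wronskian u u' v v') 0 y := by
    simpa using hu.hasDerivAt_wronskian hv hy
  have hconst := constant_of_has_deriv_right_zero
    (fun y hy => (hderiv y hy).continuousAt.continuousWithinAt)
    (fun y hy => (hderiv y (Ico_subset_Icc_self hy)).hasDerivWithinAt)
  rw [hconst x hx, hconst 1 (right_mem_Icc.2 zero_le_one)]

theorem ne_of_wronskian (hu : IsSolution q lam u u' u'') (hv : IsSolution q mu v v' v'')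
    (h0 : wronskian u u' v v' 0 = 0) (h1 : wronskian u u' v v' 1 ≠ 0) : lam ≠ mu := by
  rintro rfl
  exact h1 ((hu.wronskian_eq_wronskian_one hv (left_mem_Icc.2 zero_le_one)).symm.trans h0)

theorem gammaForm_sq_right (hu : IsSolution q lam u u' u'') (hv : IsSolution q lam v v' v'') :
    gammaForm (fun x => u x * v x) (fun x => u' x * v x + u x * v' x)
      (fun x => v x ^ 2) (fun x => 2 * v x * v' x) =
      wronskian u u' v v' 1 * ∫ x in (0:ℝ)..1, v x ^ 2 := by
  rw [gammaForm, ← integral_const_mul]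
  refine integral_congr fun x hx => ?_
  rw [uIcc_of_le zero_le_one] at hx
  have hW := hu.wronskian_eq_wronskian_one hv hx
  simp only [wronskian] at hW ⊢
  linear_combination v x ^ 2 * hW

theorem gammaForm_normalized_sq_right (hu : IsSolution q lam u u' u'')
    (hv : IsSolution q lam v v' v'') (hv1 : v 1 ≠ 0 ∨ v' 1 ≠ 0) :
    gammaForm (fun x => u x * v x) (fun x => u' x * v x + u x * v' x)
      (fun x => (v x / √(∫ t in (0:ℝ)..1, v t ^ 2)) ^ 2)
      (fun x => 2 * (v x / √(∫ t in (0:ℝ)..1, v t ^ 2)) *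
        (v' x / √(∫ t in (0:ℝ)..1, v t ^ 2))) =
      wronskian u u' v v' 1 := by
  have hpos := integral_sq_pos_of_hasDerivAt (fun x hx => (hv.hasDerivAt x hx).1) hv1
  rw [gammaForm_div_sq, hu.gammaForm_sq_right hv, Real.sq_sqrt hpos.le,
    mul_div_cancel_right₀ _ hpos.ne']

theorem gammaForm_normalized_sq_left (hu : IsSolution q lam u u' u'')
    (hv : IsSolution q lam v v' v'') (hu1 : u 1 ≠ 0 ∨ u' 1 ≠ 0) :
    gammaForm (fun x => u x * v x) (fun x => u' x * v x + u x * v' x)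
      (fun x => (u x / √(∫ t in (0:ℝ)..1, u t ^ 2)) ^ 2)
      (fun x => 2 * (u x / √(∫ t in (0:ℝ)..1, u t ^ 2)) *
        (u' x / √(∫ t in (0:ℝ)..1, u t ^ 2))) =
      wronskian v v' u u' 1 := by
  rw [gammaForm_mul_comm]
  exact hv.gammaForm_normalized_sq_right hu hu1

theorem sub_mul_gammaForm (hu : IsSolution q lam u u' u'') (hv : IsSolution q lam v v' v'')
    (hw : IsSolution q mu w w' w'') :
    (lam - mu) * gammaForm (fun x => u x * v x) (fun x => u' x * v x + u x * v' x)
      (fun x => w x ^ 2) (fun x => 2 * w x * w' x) =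
      wronskian u u' w w' 1 * wronskian v v' w w' 1 -
        wronskian u u' w w' 0 * wronskian v v' w w' 0 := by
  rw [gammaForm, ← integral_const_mul]
  refine integral_eq_sub_of_hasDerivAt
    (f := fun x => wronskian u u' w w' x * wronskian v v' w w' x) (fun x hx => ?_) ?_
  · rw [uIcc_of_le zero_le_one] at hx
    exact ((hu.hasDerivAt_wronskian hw hx).mul (hv.hasDerivAt_wronskian hw hx)).congr_deriv
      (by simp only [wronskian]; ring)
  · refine ContinuousOn.intervalIntegrable ?_
    rw [uIcc_of_le zero_le_one]
    have := hu.continuousOn; have := hu.continuousOn_deriv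
    have := hv.continuousOn; have := hv.continuousOn_deriv
    have := hw.continuousOn; have := hw.continuousOn_deriv
    simp only [wronskian]
    fun_prop

theorem gammaForm_div_sq_eq_zero (hu : IsSolution q lam u u' u'')
    (hv : IsSolution q lam v v' v'') (hw : IsSolution q mu w w' w'') (hne : lam ≠ mu)
    (h0 : wronskian u u' w w' 0 = 0 ∨ wronskian v v' w w' 0 = 0)
    (h1 : wronskian u u' w w' 1 = 0 ∨ wronskian v v' w w' 1 = 0) (N : ℝ) :
    gammaForm (fun x => u x * v x) (fun x => u' x * v x + u x * v' x)
      (fun x => (w x / N) ^ 2) (fun x => 2 * (w x / N) * (w' x / N)) = 0 := by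
  have h := hu.sub_mul_gammaForm hv hw
  rw [mul_eq_zero.2 h0, mul_eq_zero.2 h1, sub_zero, mul_eq_zero] at h
  rw [gammaForm_div_sq, h.resolve_left (sub_ne_zero.2 hne), zero_div]

end IsSolution

end SturmLiouville

open SturmLiouville

theorem gamma_cs_gsq_eq_delta_general
    (q : ℝ → ℝ)
    (α β γ : ℝ) (hβγ : Real.sin (β - γ) ≠ 0)
    (lam : ℕ → ℕ → ℝ)
    (hinj1 : Function.Injective (lam 1)) (hinj2 : Function.Injective (lam 2))
    (s s' s'' c c' c'' : ℕ → ℕ → ℝ → ℝ)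
    (hs : ∀ i ∈ ({1, 2} : Set ℕ), ∀ n : ℕ, ∀ x ∈ Set.Icc (0:ℝ) 1,
      HasDerivAt (s i n) (s' i n x) x ∧ HasDerivAt (s' i n) (s'' i n x) x)
    (hc : ∀ i ∈ ({1, 2} : Set ℕ), ∀ n : ℕ, ∀ x ∈ Set.Icc (0:ℝ) 1,
      HasDerivAt (c i n) (c' i n x) x ∧ HasDerivAt (c' i n) (c'' i n x) x)
    (hseq : ∀ i ∈ ({1, 2} : Set ℕ), ∀ n : ℕ, ∀ x ∈ Set.Icc (0:ℝ) 1,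
      -s'' i n x + q x * s i n x = lam i n * s i n x)
    (hceq : ∀ i ∈ ({1, 2} : Set ℕ), ∀ n : ℕ, ∀ x ∈ Set.Icc (0:ℝ) 1,
      -c'' i n x + q x * c i n x = lam i n * c i n x)
    (hsval : ∀ i ∈ ({1, 2} : Set ℕ), ∀ n : ℕ,
      s i n 1 = Real.sin β ∧ s' i n 1 = -Real.cos β)
    (hcval : ∀ i ∈ ({1, 2} : Set ℕ), ∀ n : ℕ,
      c i n 1 = Real.sin γ ∧ c' i n 1 = -Real.cos γ)
    (hsbc : ∀ n : ℕ, s 1 n 0 * Real.cos α + s' 1 n 0 * Real.sin α = 0)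
    (hcbc : ∀ n : ℕ, c 2 n 0 * Real.cos α + c' 2 n 0 * Real.sin α = 0)
    (g g' : ℕ → ℕ → ℝ → ℝ)
    (hg1 : ∀ n : ℕ, ∀ x : ℝ,
      g 1 n x = s 1 n x / Real.sqrt (∫ t in (0:ℝ)..1, (s 1 n t)^2) ∧
      g' 1 n x = s' 1 n x / Real.sqrt (∫ t in (0:ℝ)..1, (s 1 n t)^2))
    (hg2 : ∀ n : ℕ, ∀ x : ℝ,
      g 2 n x = c 2 n x / Real.sqrt (∫ t in (0:ℝ)..1, (c 2 n t)^2) ∧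
      g' 2 n x = c' 2 n x / Real.sqrt (∫ t in (0:ℝ)..1, (c 2 n t)^2)) :
    ∀ i ∈ ({1, 2} : Set ℕ), ∀ j ∈ ({1, 2} : Set ℕ), ∀ n m : ℕ,
      (∫ x in (0:ℝ)..1,
          ((c i n x * s i n x) * (2 * g j m x * g' j m x)
            - (c' i n x * s i n x + c i n x * s' i n x) * (g j m x)^2)) =
        if i = j ∧ n = m then (-1 : ℝ)^i * Real.sin (γ - β) else 0 := by
  have h1 : (1:ℕ) ∈ ({1, 2} : Set ℕ) := by simp
  have h2 : (2:ℕ) ∈ ({1, 2} : Set ℕ) := by simp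
  have hS i (hi : i ∈ ({1, 2} : Set ℕ)) n : IsSolution q (lam i n) (s i n) (s' i n) (s'' i n) :=
    ⟨hs i hi n, hseq i hi n⟩
  have hC i (hi : i ∈ ({1, 2} : Set ℕ)) n : IsSolution q (lam i n) (c i n) (c' i n) (c'' i n) :=
    ⟨hc i hi n, hceq i hi n⟩
  -- the terminal values are separated boundary conditions at `1`, with angles `β` and `γ`
  have hsβ i (hi : i ∈ ({1, 2} : Set ℕ)) n :
      s i n 1 * Real.cos β + s' i n 1 * Real.sin β = 0 := by
    rw [(hsval i hi n).1, (hsval i hi n).2]; ring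
  have hcγ i (hi : i ∈ ({1, 2} : Set ℕ)) n :
      c i n 1 * Real.cos γ + c' i n 1 * Real.sin γ = 0 := by
    rw [(hcval i hi n).1, (hcval i hi n).2]; ring
  have hW i (hi : i ∈ ({1, 2} : Set ℕ)) n j (hj : j ∈ ({1, 2} : Set ℕ)) m :
      wronskian (c i n) (c' i n) (s j m) (s' j m) 1 = -Real.sin (γ - β) := by
    rw [wronskian, (hsval j hj m).1, (hsval j hj m).2, (hcval i hi n).1, (hcval i hi n).2,
      Real.sin_sub]; ring
  have hnontriv (θ : ℝ) : Real.sin θ ≠ 0 ∨ -Real.cos θ ≠ 0 := by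
    by_contra! h
    simpa [h.1, neg_eq_zero.1 h.2] using Real.sin_sq_add_cos_sq θ
  have hsep n m : lam 1 n ≠ lam 2 m :=
    (hS 1 h1 n).ne_of_wronskian (hC 2 h2 m) (wronskian_eq_zero_of_boundary (hsbc n) (hcbc m))
      (by rwa [wronskian_swap, hW 2 h2 m 1 h1 n, neg_neg, ← neg_sub, Real.sin_neg, neg_ne_zero])
  intro i hi j hj n m
  rcases hi with rfl | rfl <;> rcases hj with rfl | rfl <;> simp only [hg1 m, hg2 m]
  · rcases eq_or_ne n m with rfl | hnm
    · rw [if_pos (by simp)]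
      exact ((hC 1 h1 n).gammaForm_normalized_sq_right (hS 1 h1 n)
        (by rw [(hsval 1 h1 n).1, (hsval 1 h1 n).2]; exact hnontriv β)).trans
        (by rw [hW 1 h1 n 1 h1 n]; ring)
    · rw [if_neg (by omega)]
      exact (hC 1 h1 n).gammaForm_div_sq_eq_zero (hS 1 h1 n) (hS 1 h1 m) (hinj1.ne hnm)
        (.inr (wronskian_eq_zero_of_boundary (hsbc n) (hsbc m)))
        (.inr (wronskian_eq_zero_of_boundary (hsβ 1 h1 n) (hsβ 1 h1 m))) _
  · rw [if_neg (by omega)]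
    exact (hC 1 h1 n).gammaForm_div_sq_eq_zero (hS 1 h1 n) (hC 2 h2 m) (hsep n m)
      (.inr (wronskian_eq_zero_of_boundary (hsbc n) (hcbc m)))
      (.inl (wronskian_eq_zero_of_boundary (hcγ 1 h1 n) (hcγ 2 h2 m))) _
  · rw [if_neg (by omega)]
    exact (hC 2 h2 n).gammaForm_div_sq_eq_zero (hS 2 h2 n) (hS 1 h1 m) (hsep m n).symm
      (.inl (wronskian_eq_zero_of_boundary (hcbc n) (hsbc m)))
      (.inr (wronskian_eq_zero_of_boundary (hsβ 2 h2 n) (hsβ 1 h1 m))) _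
  · rcases eq_or_ne n m with rfl | hnm
    · rw [if_pos (by simp)]
      exact ((hC 2 h2 n).gammaForm_normalized_sq_left (hS 2 h2 n)
        (by rw [(hcval 2 h2 n).1, (hcval 2 h2 n).2]; exact hnontriv γ)).trans
        (by rw [wronskian_swap, hW 2 h2 n 2 h2 n]; ring)
    · rw [if_neg (by omega)]
      exact (hC 2 h2 n).gammaForm_div_sq_eq_zero (hS 2 h2 n) (hC 2 h2 m) (hinj2.ne hnm)
        (.inl (wronskian_eq_zero_of_boundary (hcbc n) (hcbc m)))
        (.inl (wronskian_eq_zero_of_boundary (hcγ 2 h2 n) (hcγ 2 h2 m))) _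

/-- Central lemma: with `sin(β − γ) ≠ 0` and the solutions `s_{i,n}`, `c_{i,n}` of
`−u'' + q u = λ_{i,n} u` with terminal values determined by `β` resp. `γ`, and the
normalized eigenfunctions `g_{1,n} = s_{1,n}/‖s_{1,n}‖₂`, `g_{2,n} = c_{2,n}/‖c_{2,n}‖₂`,
we have `Γ(c_{i,n} s_{i,n}, g_{j,m}²) = (−1)^i sin(γ − β) δ_{n,m} δ_{i,j}`. -/
theorem gamma_cs_gsq_eq_delta
    (q : ℝ → ℝ) (hq : ContinuousOn q (Set.Icc (0:ℝ) 1))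
    (α β γ : ℝ) (hβγ : Real.sin (β - γ) ≠ 0)
    (lam : ℕ → ℕ → ℝ)
    (hinj1 : Function.Injective (lam 1)) (hinj2 : Function.Injective (lam 2))
    (s s' s'' c c' c'' : ℕ → ℕ → ℝ → ℝ)
    (hs : ∀ i ∈ ({1, 2} : Set ℕ), ∀ n : ℕ, ∀ x ∈ Set.Icc (0:ℝ) 1,
      HasDerivAt (s i n) (s' i n x) x ∧ HasDerivAt (s' i n) (s'' i n x) x)
    (hs'' : ∀ i ∈ ({1, 2} : Set ℕ), ∀ n : ℕ, ContinuousOn (s'' i n) (Set.Icc (0:ℝ) 1))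
    (hc : ∀ i ∈ ({1, 2} : Set ℕ), ∀ n : ℕ, ∀ x ∈ Set.Icc (0:ℝ) 1,
      HasDerivAt (c i n) (c' i n x) x ∧ HasDerivAt (c' i n) (c'' i n x) x)
    (hc'' : ∀ i ∈ ({1, 2} : Set ℕ), ∀ n : ℕ, ContinuousOn (c'' i n) (Set.Icc (0:ℝ) 1))
    (hseq : ∀ i ∈ ({1, 2} : Set ℕ), ∀ n : ℕ, ∀ x ∈ Set.Icc (0:ℝ) 1,
      -s'' i n x + q x * s i n x = lam i n * s i n x)
    (hceq : ∀ i ∈ ({1, 2} : Set ℕ), ∀ n : ℕ, ∀ x ∈ Set.Icc (0:ℝ) 1,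
      -c'' i n x + q x * c i n x = lam i n * c i n x)
    (hsval : ∀ i ∈ ({1, 2} : Set ℕ), ∀ n : ℕ,
      s i n 1 = Real.sin β ∧ s' i n 1 = -Real.cos β)
    (hcval : ∀ i ∈ ({1, 2} : Set ℕ), ∀ n : ℕ,
      c i n 1 = Real.sin γ ∧ c' i n 1 = -Real.cos γ)
    (hsbc : ∀ n : ℕ, s 1 n 0 * Real.cos α + s' 1 n 0 * Real.sin α = 0)
    (hcbc : ∀ n : ℕ, c 2 n 0 * Real.cos α + c' 2 n 0 * Real.sin α = 0)
    (g g' : ℕ → ℕ → ℝ → ℝ)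
    (hg1 : ∀ n : ℕ, ∀ x : ℝ,
      g 1 n x = s 1 n x / Real.sqrt (∫ t in (0:ℝ)..1, (s 1 n t)^2) ∧
      g' 1 n x = s' 1 n x / Real.sqrt (∫ t in (0:ℝ)..1, (s 1 n t)^2))
    (hg2 : ∀ n : ℕ, ∀ x : ℝ,
      g 2 n x = c 2 n x / Real.sqrt (∫ t in (0:ℝ)..1, (c 2 n t)^2) ∧
      g' 2 n x = c' 2 n x / Real.sqrt (∫ t in (0:ℝ)..1, (c 2 n t)^2)) :
    ∀ i ∈ ({1, 2} : Set ℕ), ∀ j ∈ ({1, 2} : Set ℕ), ∀ n m : ℕ,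
      (∫ x in (0:ℝ)..1,
          ((c i n x * s i n x) * (2 * g j m x * g' j m x)
            - (c' i n x * s i n x + c i n x * s' i n x) * (g j m x)^2)) =
        if i = j ∧ n = m then (-1 : ℝ)^i * Real.sin (γ - β) else 0 :=
  gamma_cs_gsq_eq_delta_general q α β γ hβγ lam hinj1 hinj2 s s' s'' c c' c'' hs hc hseq hceq hsval
    hcval hsbc hcbc g g' hg1 hg2
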